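/- For x, y ∈ ℝⁿ, the equality ⟨x, y⟩ = ⟨x↓, y↓⟩ holds if and only if (x + y)↓ = x↓ + y↓. -/
import Mathlib


open Finset

/-- Decreasing rearrangement of a vector in ℝⁿ. -/
noncomputable def dsort {n : ℕ} (v : Fin n → ℝ) : Fin n → ℝ :=
  fun i => - ((fun j => - v j) ∘ Tuple.sort (fun j => - v j)) i

lemma dsort_eq {n : ℕ} (v : Fin n → ℝ) :
    dsort v = v ∘ Tuple.sort (fun j => - v j) := by
  funext i
  simp [dsort]

lemma dsort_antitone {n : ℕ} (v : Fin n → ℝ) : Antitone (dsort v) := by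
  intro i j hij
  have h := Tuple.monotone_sort (fun j => - v j) hij
  simp only [dsort]
  linarith [h]

lemma comp_eq_dsort_of_antitone {n : ℕ} {v : Fin n → ℝ} {σ : Equiv.Perm (Fin n)}
    (h : Antitone (v ∘ σ)) : v ∘ σ = dsort v := by
  have hmono : Monotone ((fun j => - v j) ∘ σ) := by
    intro i j hij
    simpa using h hij
  have := (Tuple.comp_sort_eq_comp_iff_monotone (f := fun j => - v j) (σ := σ)).mpr hmono
  rw [dsort_eq]
  funext i
  have := congrFun this i
  simp only [Function.comp_apply] at this ⊢
  linarith

lemma sum_sq_dsort {n : ℕ} (v : Fin n → ℝ) :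
    ∑ i, (dsort v i)^2 = ∑ i, (v i)^2 := by
  rw [dsort_eq]
  exact Equiv.sum_comp (Tuple.sort fun j => - v j) (fun i => (v i)^2)

lemma monovary_of_eq {n : ℕ} {x y : Fin n → ℝ}
    (h : ∑ i, x i * y i = ∑ i, dsort x i * dsort y i) : Monovary x y := by
  set a := dsort x with ha
  set b := dsort y with hb
  set τ := Tuple.sort (fun j => - x j) with hτ
  set ρ := Tuple.sort (fun j => - y j) with hρ
  have hxa : ∀ i, x (τ i) = a i := fun i => (congrFun (dsort_eq x) i).symm
  have hyb : ∀ i, y (ρ i) = b i := fun i => (congrFun (dsort_eq y) i).symm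
  have hmono : Monovary a b := (dsort_antitone x).monovary (dsort_antitone y)
  set σ : Equiv.Perm (Fin n) := τ.trans ρ.symm with hσ
  have hsum : ∑ i, a i * b (σ i) = ∑ i, a i * b i := by
    rw [← h]
    have : ∑ i, x i * y i = ∑ i, x (τ i) * y (τ i) :=
      (Equiv.sum_comp τ (fun i => x i * y i)).symm
    rw [this]
    apply Finset.sum_congr rfl
    intro i _
    rw [hxa]
    congr 1
    have : y (τ i) = y (ρ (σ i)) := by
      simp [hσ]
    rw [this, hyb]
  have hm : Monovary a (b ∘ σ) := hmono.sum_mul_comp_perm_eq_sum_mul_iff.mp hsum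
  -- Monovary (x ∘ τ) (y ∘ τ) since a = x ∘ τ and b ∘ σ = y ∘ τ
  have key : ∀ k, (b ∘ σ) k = y (τ k) := by
    intro k
    have := hyb (ρ.symm (τ k))
    simp only [Equiv.apply_symm_apply] at this
    simp only [Function.comp_apply, hσ, Equiv.trans_apply]
    exact this.symm
  intro i j hij
  have hij' : (b ∘ σ) (τ.symm i) < (b ∘ σ) (τ.symm j) := by
    rw [key, key]
    simpa using hij
  have hle := hm hij'
  have ei : a (τ.symm i) = x i := by
    have := hxa (τ.symm i); simpa using this.symm
  have ej : a (τ.symm j) = x j := by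
    have := hxa (τ.symm j); simpa using this.symm
  rw [← ei, ← ej]
  exact hle

theorem stmt9 {n : ℕ} (x y : Fin n → ℝ) :
    (∑ i, x i * y i = ∑ i, dsort x i * dsort y i) ↔
      dsort (x + y) = dsort x + dsort y := by
  constructor
  · intro h
    have hmono : Monovary x y := monovary_of_eq h
    have hmono' : Monovary y x := hmono.symm
    set σ := Tuple.sort (fun j => - (x + y) j) with hσ
    have hs : Antitone ((x + y) ∘ σ) := by
      intro i j hij
      have h := Tuple.monotone_sort (fun j => - (x + y) j) hij
      simp only [Function.comp_apply] at h ⊢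
      linarith
    have hx : Antitone (x ∘ σ) := by
      intro i j hij
      by_contra hc
      push_neg at hc
      simp only [Function.comp_apply] at hc
      have h1 : y (σ i) ≤ y (σ j) := hmono' hc
      have h2 : (x + y) (σ j) ≤ (x + y) (σ i) := hs hij
      simp only [Pi.add_apply] at h2
      linarith
    have hy : Antitone (y ∘ σ) := by
      intro i j hij
      by_contra hc
      push_neg at hc
      simp only [Function.comp_apply] at hc
      have h1 : x (σ i) ≤ x (σ j) := hmono hc
      have h2 : (x + y) (σ j) ≤ (x + y) (σ i) := hs hij
      simp only [Pi.add_apply] at h2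
      linarith
    have e1 : x ∘ σ = dsort x := comp_eq_dsort_of_antitone hx
    have e2 : y ∘ σ = dsort y := comp_eq_dsort_of_antitone hy
    have e3 : (x + y) ∘ σ = dsort (x + y) := comp_eq_dsort_of_antitone hs
    rw [← e1, ← e2, ← e3]
    rfl
  · intro h
    have h1 : ∑ i, (dsort (x+y) i)^2 = ∑ i, ((x+y) i)^2 := sum_sq_dsort (x+y)
    have h2 : ∑ i, (dsort x i)^2 = ∑ i, (x i)^2 := sum_sq_dsort x
    have h3 : ∑ i, (dsort y i)^2 = ∑ i, (y i)^2 := sum_sq_dsort y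
    rw [h] at h1
    have E : ∀ (u v : Fin n → ℝ), ∑ i, (u i + v i)^2
        = ∑ i, (u i)^2 + 2 * ∑ i, u i * v i + ∑ i, (v i)^2 := by
      intro u v
      rw [Finset.mul_sum, ← Finset.sum_add_distrib, ← Finset.sum_add_distrib]
      exact Finset.sum_congr rfl (fun i _ => by ring)
    simp only [Pi.add_apply] at h1
    rw [E (dsort x) (dsort y), E x y] at h1
    linarith
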